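/- arXiv:2204.11622 — 5 statements merged into one kernel-verified Lean document; each statement's English description precedes it below -/
import Mathlib

section
/- Let P and Q be orthogonal projections (hermitian idempotent n×n complex matrices) with equal rank, and suppose there exists a scalar α ≥ 0 such that (α+1)P ≤ Q + αI in the Loewner order. Then P = Q. -/
open Matrix
open scoped ComplexOrder

/-!
Compressing the Loewner inequality by `P` kills the `α` terms and leaves `P (1 - Q) P ≤ 0`.
Since `1 - Q` is an orthogonal projection, `P (1 - Q) P = ((1 - Q) P)ᴴ (1 - Q) P ≥ 0`, so
`(1 - Q) P = 0`, i.e. `Q P = P`. Hence `range P ⊆ range Q`, with equality by the rank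
hypothesis, so also `P Q = Q`; taking adjoints in `Q P = P` gives `P Q = P`.
-/

namespace Matrix

variable {n : Type*} [Fintype n]

open scoped MatrixOrder in
theorem mul_eq_right_of_posSemidef_conjTranspose_mul_sub_one_mul {𝕜 m : Type*} [RCLike 𝕜]
    [DecidableEq n] [Fintype m] {Q : Matrix n n 𝕜} (hQherm : Q.IsHermitian) (hQidem : Q * Q = Q)
    {P : Matrix n m 𝕜} (h : (Pᴴ * (Q - 1) * P).PosSemidef) : Q * P = P := by
  have hcompl : (1 - Q) * (1 - Q) = 1 - Q := by simp [mul_sub, sub_mul, hQidem]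
  have hgram : ((1 - Q) * P)ᴴ * ((1 - Q) * P) = -(Pᴴ * (Q - 1) * P) := by
    rw [conjTranspose_mul, conjTranspose_sub, conjTranspose_one, hQherm.eq, Matrix.mul_assoc,
      ← Matrix.mul_assoc (1 - Q), hcompl, ← neg_sub, Matrix.neg_mul, Matrix.mul_neg,
      Matrix.mul_assoc]
  have hzero : ((1 - Q) * P)ᴴ * ((1 - Q) * P) = 0 :=
    le_antisymm (by rw [hgram, neg_nonpos]; exact h.nonneg)
      (posSemidef_conjTranspose_mul_self _).nonneg
  rw [conjTranspose_mul_self_eq_zero, Matrix.sub_mul, Matrix.one_mul, sub_eq_zero] at hzero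
  exact hzero.symm

theorem mul_eq_right_of_mul_eq_right_of_rank_eq {K : Type*} [Field K] [DecidableEq n]
    {P Q : Matrix n n K} (hPidem : P * P = P) (hQP : Q * P = P) (hrank : P.rank = Q.rank) :
    P * Q = Q := by
  have hle : LinearMap.range P.mulVecLin ≤ LinearMap.range Q.mulVecLin := by
    rw [← hQP, mulVecLin_mul]
    exact LinearMap.range_comp_le_range _ _
  have hidem : IsIdempotentElem P.mulVecLin := by
    rw [IsIdempotentElem, Module.End.mul_eq_comp, ← mulVecLin_mul, hPidem]
  have hcomp := (LinearMap.IsIdempotentElem.comp_eq_right_iff hidem Q.mulVecLin).mpr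
    (Submodule.eq_of_le_of_finrank_eq hle hrank).ge
  rw [← mulVecLin_mul, ← toLin'_apply', ← toLin'_apply'] at hcomp
  exact toLin'.injective hcomp

end Matrix

theorem stmt0_general {n : ℕ} (P Q : Matrix (Fin n) (Fin n) ℂ)
    (hPherm : P.IsHermitian) (hPidem : P * P = P)
    (hQherm : Q.IsHermitian) (hQidem : Q * Q = Q)
    (hrank : P.rank = Q.rank)
    (α : ℝ)
    (hle : ((Q + α • (1 : Matrix (Fin n) (Fin n) ℂ)) - (α + 1) • P).PosSemidef) :
    P = Q := by
  have hcompress : (Pᴴ * (Q - 1) * P).PosSemidef := by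
    convert hle.conjTranspose_mul_mul_same P using 1
    simp only [hPherm.eq, mul_add, add_mul, mul_sub, sub_mul, Matrix.mul_smul, Matrix.smul_mul,
      mul_one, hPidem]
    module
  have hQP : Q * P = P :=
    mul_eq_right_of_posSemidef_conjTranspose_mul_sub_one_mul hQherm hQidem hcompress
  calc P = (Q * P)ᴴ := by rw [hQP, hPherm.eq]
    _ = P * Q := by rw [conjTranspose_mul, hPherm.eq, hQherm.eq]
    _ = Q := mul_eq_right_of_mul_eq_right_of_rank_eq hPidem hQP hrank

/-- If `P` and `Q` are orthogonal projections of equal rank and `(α+1)P ≤ Q + αI`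
in the Loewner order for some `α ≥ 0`, then `P = Q`. -/
theorem stmt0 {n : ℕ} (P Q : Matrix (Fin n) (Fin n) ℂ)
    (hPherm : P.IsHermitian) (hPidem : P * P = P)
    (hQherm : Q.IsHermitian) (hQidem : Q * Q = Q)
    (hrank : P.rank = Q.rank)
    (α : ℝ) (hα : 0 ≤ α)
    (hle : ((Q + α • (1 : Matrix (Fin n) (Fin n) ℂ)) - (α + 1) • P).PosSemidef) :
    P = Q :=
  stmt0_general P Q hPherm hPidem hQherm hQidem hrank α hle
end

section
/- Let P, Q, R be rank-one orthogonal projections on ℂⁿ with PQ = QP = 0 and R ≤ P + Q. Then the maximum of the set {t ∈ [0,∞) : tR ≤ Q + 2P} equals 2/(2 − Tr(PR)). -/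
open Matrix
open scoped ComplexOrder

/-!
Write `R = v vᴴ` with `v` a unit vector; `R ≤ P + Q` forces `(P + Q) v = v`. For a positive
semidefinite `M` and `v = M w`, Cauchy–Schwarz for the semi-inner product `⟨x, M y⟩` gives
`|⟨v, x⟩|² ≤ ⟨w, v⟩ ⟨x, M x⟩`, so `M - t v vᴴ ≥ 0` as soon as `t ⟨w, v⟩ ≤ 1`, and testing at `x = w`
gives the converse. For `M = Q + 2P` one can take `w = (Q + P/2) v`, and then
`⟨w, v⟩ = ⟨v, Q v⟩ + ⟨v, P v⟩ / 2 = 1 - Tr(PR) / 2`.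
-/

namespace Matrix

variable {n 𝕜 : Type*} [Fintype n] [RCLike 𝕜]

theorem IsHermitian.star_mulVec_dotProduct {A : Matrix n n 𝕜} (hA : A.IsHermitian)
    (x y : n → 𝕜) : star (A *ᵥ x) ⬝ᵥ y = star x ⬝ᵥ (A *ᵥ y) := by
  rw [star_mulVec, dotProduct_mulVec, hA.eq]

theorem IsHermitian.posSemidef_iff_re_nonneg {A : Matrix n n 𝕜} (hA : A.IsHermitian) :
    A.PosSemidef ↔ ∀ x, 0 ≤ RCLike.re (star x ⬝ᵥ (A *ᵥ x)) :=
  ⟨PosSemidef.re_dotProduct_nonneg, fun h ↦ .of_dotProduct_mulVec_nonneg hA fun x ↦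
    RCLike.nonneg_iff.mpr ⟨h x, hA.im_star_dotProduct_mulVec_self x⟩⟩

theorem IsHermitian.posSemidef_of_mul_self_eq_self {A : Matrix n n 𝕜} (hA : A.IsHermitian)
    (hA2 : A * A = A) : A.PosSemidef := by
  simpa [hA.eq, hA2] using posSemidef_conjTranspose_mul_self A

theorem PosSemidef.norm_dotProduct_mulVec_sq_le {M : Matrix n n 𝕜} (hM : M.PosSemidef)
    (x y : n → 𝕜) :
    ‖star x ⬝ᵥ (M *ᵥ y)‖ ^ 2 ≤
      RCLike.re (star x ⬝ᵥ (M *ᵥ x)) * RCLike.re (star y ⬝ᵥ (M *ᵥ y)) := by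
  let := M.toSeminormedAddCommGroup hM
  let := M.toInnerProductSpace hM
  have hinner : ∀ x y, inner 𝕜 x y = star x ⬝ᵥ (M *ᵥ y) := fun _ _ ↦ dotProduct_comm _ _
  have h := inner_mul_inner_self_le (𝕜 := 𝕜) x y
  rw [norm_inner_symm y x] at h
  simpa only [sq, hinner] using h

theorem star_dotProduct_vecMulVec_star_mulVec (v x : n → 𝕜) :
    star x ⬝ᵥ (vecMulVec v (star v) *ᵥ x) = ((‖star v ⬝ᵥ x‖ ^ 2 : ℝ) : 𝕜) := by
  rw [vecMulVec_mulVec, op_smul_eq_smul, dotProduct_smul, smul_eq_mul, star_dotProduct x v,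
    RCLike.star_def, RCLike.mul_conj]
  push_cast; rfl

theorem trace_mul_vecMulVec_star (A : Matrix n n 𝕜) (v : n → 𝕜) :
    (A * vecMulVec v (star v)).trace = star v ⬝ᵥ (A *ᵥ v) := by
  rw [mul_vecMulVec, trace_vecMulVec, dotProduct_comm]

theorem exists_smul_star_dotProduct_self_eq_one {u : n → 𝕜} (hu : u ≠ 0) :
    ∃ c : 𝕜, star (c • u) ⬝ᵥ (c • u) = 1 := by
  have hnorm : ‖WithLp.toLp 2 u‖ ≠ 0 := by simpa using hu
  refine ⟨(‖WithLp.toLp 2 u‖⁻¹ : ℝ), ?_⟩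
  have h := inner_self_eq_norm_sq_to_K (𝕜 := 𝕜) (WithLp.toLp 2 u)
  rw [EuclideanSpace.inner_toLp_toLp, dotProduct_comm] at h
  rw [star_smul, smul_dotProduct, dotProduct_smul, h, RCLike.star_def, RCLike.conj_ofReal]
  simp only [smul_eq_mul]
  push_cast
  field_simp

theorem IsHermitian.exists_eq_vecMulVec_star_of_rank_eq_one {A : Matrix n n 𝕜}
    (hA : A.IsHermitian) (hA2 : A * A = A) (hrank : A.rank = 1) :
    ∃ v, star v ⬝ᵥ v = 1 ∧ A = vecMulVec v (star v) := by
  obtain ⟨⟨u, y, rfl⟩, hu, -⟩ := finrank_eq_one_iff'.mp hrank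
  obtain ⟨c, hv⟩ := exists_smul_star_dotProduct_self_eq_one (Subtype.coe_ne_coe.mpr hu)
  set v := c • A.mulVecLin y
  have hv0 : v ≠ 0 := by rintro h; simp [h] at hv
  have hvmem : v ∈ LinearMap.range A.mulVecLin := Submodule.smul_mem _ c ⟨y, rfl⟩
  have hAv : A *ᵥ v = v := by simp [v, mulVec_smul, mulVec_mulVec, hA2]
  have hspan := (finrank_eq_one_iff_of_nonzero' ⟨v, hvmem⟩ (by simpa using hv0)).mp hrank
  refine ⟨v, hv, ext_iff_mulVec.mpr fun x ↦ ?_⟩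
  obtain ⟨d, hd⟩ := hspan ⟨A *ᵥ x, x, rfl⟩
  replace hd : A *ᵥ x = d • v := (congrArg Subtype.val hd).symm
  have hcoeff : d = star v ⬝ᵥ x := by
    have h := congrArg (star v ⬝ᵥ ·) hd
    simpa [dotProduct_smul, hv, ← hA.star_mulVec_dotProduct, hAv, eq_comm] using h
  rw [vecMulVec_mulVec, op_smul_eq_smul, hd, hcoeff]

theorem IsHermitian.mulVec_eq_self_of_posSemidef_sub_vecMulVec {E : Matrix n n 𝕜}
    (hE : E.IsHermitian) (hE2 : E * E = E) {v : n → 𝕜}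
    (h : (E - vecMulVec v (star v)).PosSemidef) : E *ᵥ v = v := by
  set x := v - E *ᵥ v
  have hEx : E *ᵥ x = 0 := by simp [x, mulVec_sub, mulVec_mulVec, hE2]
  have hvx : star v ⬝ᵥ x = 0 := by
    have hq := h.re_dotProduct_nonneg x
    rw [sub_mulVec, hEx, dotProduct_sub, star_dotProduct_vecMulVec_star_mulVec] at hq
    simpa using hq
  have hxx : star x ⬝ᵥ x = 0 := by
    rw [show star x = star v - star (E *ᵥ v) by simp [x], sub_dotProduct,
      hE.star_mulVec_dotProduct, hEx, hvx, dotProduct_zero, sub_zero]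
  exact (sub_eq_zero.mp (dotProduct_star_self_eq_zero.mp hxx)).symm

theorem posSemidef_sub_smul_vecMulVec_star_iff {M : Matrix n n 𝕜} (hM : M.PosSemidef)
    {v w : n → 𝕜} (hw : M *ᵥ w = v) (t : ℝ) :
    (M - t • vecMulVec v (star v)).PosSemidef ↔ t * RCLike.re (star w ⬝ᵥ v) ≤ 1 := by
  subst hw
  have hherm : (M - t • vecMulVec (M *ᵥ w) (star (M *ᵥ w))).IsHermitian :=
    hM.isHermitian.sub ((posSemidef_vecMulVec_self_star _).isHermitian.smul (.all t))
  have hform : ∀ x, RCLike.re (star x ⬝ᵥ ((M - t • vecMulVec (M *ᵥ w) (star (M *ᵥ w))) *ᵥ x)) =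
      RCLike.re (star x ⬝ᵥ (M *ᵥ x)) - t * ‖star w ⬝ᵥ (M *ᵥ x)‖ ^ 2 := by
    intro x
    rw [sub_mulVec, smul_mulVec, dotProduct_sub, dotProduct_smul,
      star_dotProduct_vecMulVec_star_mulVec, hM.isHermitian.star_mulVec_dotProduct, map_sub,
      RCLike.smul_re, RCLike.ofReal_re]
  set s := RCLike.re (star w ⬝ᵥ (M *ᵥ w))
  have hs : 0 ≤ s := hM.re_dotProduct_nonneg w
  have hnorm : ‖star w ⬝ᵥ (M *ᵥ w)‖ ^ 2 = s ^ 2 := by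
    rw [RCLike.norm_sq_eq_def, hM.isHermitian.im_star_dotProduct_mulVec_self]
    ring
  rw [hherm.posSemidef_iff_re_nonneg]
  simp only [hform]
  constructor
  · intro h
    have hatw := h w
    rw [hnorm] at hatw
    rcases hs.eq_or_lt with hs0 | hs0
    · simp [← hs0]
    · nlinarith
  · intro hts x
    have hcs := hM.norm_dotProduct_mulVec_sq_le w x
    have hx := hM.re_dotProduct_nonneg x
    rcases le_or_gt t 0 with ht | ht
    · nlinarith [sq_nonneg ‖star w ⬝ᵥ (M *ᵥ x)‖]
    · nlinarith [mul_le_mul_of_nonneg_left hcs ht.le]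

theorem isGreatest_posSemidef_sub_smul_vecMulVec_star {M : Matrix n n 𝕜} (hM : M.PosSemidef)
    {v w : n → 𝕜} (hw : M *ᵥ w = v) (hs : 0 < RCLike.re (star w ⬝ᵥ v)) :
    IsGreatest {t : ℝ | 0 ≤ t ∧ (M - t • vecMulVec v (star v)).PosSemidef}
      (RCLike.re (star w ⬝ᵥ v))⁻¹ := by
  simp only [posSemidef_sub_smul_vecMulVec_star_iff hM hw]
  refine ⟨⟨inv_nonneg.mpr hs.le, (inv_mul_cancel₀ hs.ne').le⟩, fun t ⟨_, ht⟩ ↦ ?_⟩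
  rwa [← one_div, le_div_iff₀ hs]

end Matrix

theorem stmt2_general {n : ℕ} (P Q R : Matrix (Fin n) (Fin n) ℂ)
    (hPherm : P.IsHermitian) (hPidem : P * P = P)
    (hQherm : Q.IsHermitian) (hQidem : Q * Q = Q)
    (hRherm : R.IsHermitian) (hRidem : R * R = R) (hRrank : R.rank = 1)
    (hPQ : P * Q = 0) (hQP : Q * P = 0)
    (hRle : ((P + Q) - R).PosSemidef) :
    IsGreatest {t : ℝ | 0 ≤ t ∧ ((Q + (2 : ℝ) • P) - t • R).PosSemidef}
      (2 / (2 - ((P * R).trace).re)) := by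
  obtain ⟨v, hv, rfl⟩ := hRherm.exists_eq_vecMulVec_star_of_rank_eq_one hRidem hRrank
  have hPQv : (P + Q) *ᵥ v = v := (hPherm.add hQherm).mulVec_eq_self_of_posSemidef_sub_vecMulVec
    (by simp [add_mul, mul_add, hPidem, hQidem, hPQ, hQP]) hRle
  have hP := hPherm.posSemidef_of_mul_self_eq_self hPidem
  have hQ := hQherm.posSemidef_of_mul_self_eq_self hQidem
  have hinv : (Q + (2 : ℝ) • P) * (Q + (2⁻¹ : ℝ) • P) = P + Q := by
    simp [add_mul, mul_add, hPidem, hQidem, hPQ, hQP, smul_smul, add_comm]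
  have hw : (Q + (2 : ℝ) • P) *ᵥ ((Q + (2⁻¹ : ℝ) • P) *ᵥ v) = v := by
    rw [mulVec_mulVec, hinv, hPQv]
  have hsplit : RCLike.re (star v ⬝ᵥ (Q *ᵥ v)) = 1 - RCLike.re (star v ⬝ᵥ (P *ᵥ v)) := by
    have h := congrArg RCLike.re (congrArg (star v ⬝ᵥ ·) hPQv)
    simp only [add_mulVec, dotProduct_add, map_add, hv, RCLike.one_re] at h
    linarith
  have hs : RCLike.re (star ((Q + (2⁻¹ : ℝ) • P) *ᵥ v) ⬝ᵥ v) =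
      1 - RCLike.re (star v ⬝ᵥ (P *ᵥ v)) / 2 := by
    rw [(hQherm.add (hPherm.smul (.all _))).star_mulVec_dotProduct, add_mulVec, dotProduct_add,
      smul_mulVec, dotProduct_smul, map_add, RCLike.smul_re, hsplit]
    ring
  have hQv := hQ.re_dotProduct_nonneg v
  rw [trace_mul_vecMulVec_star]
  convert isGreatest_posSemidef_sub_smul_vecMulVec_star (hQ.add (hP.smul zero_le_two)) hw
    (by rw [hs]; linarith) using 1
  rw [hs, ← RCLike.re_to_complex]
  field_simp

/-- If `P`, `Q`, `R` are rank-one orthogonal projections with `P ⊥ Q` and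
`R ≤ P + Q`, then `max {t ∈ [0,∞) : tR ≤ Q + 2P} = 2/(2 - Tr(PR))`. -/
theorem stmt2 {n : ℕ} (P Q R : Matrix (Fin n) (Fin n) ℂ)
    (hPherm : P.IsHermitian) (hPidem : P * P = P) (hPrank : P.rank = 1)
    (hQherm : Q.IsHermitian) (hQidem : Q * Q = Q) (hQrank : Q.rank = 1)
    (hRherm : R.IsHermitian) (hRidem : R * R = R) (hRrank : R.rank = 1)
    (hPQ : P * Q = 0) (hQP : Q * P = 0)
    (hRle : ((P + Q) - R).PosSemidef) :
    IsGreatest {t : ℝ | 0 ≤ t ∧ ((Q + (2 : ℝ) • P) - t • R).PosSemidef}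
      (2 / (2 - ((P * R).trace).re)) :=
  stmt2_general P Q R hPherm hPidem hQherm hQidem hRherm hRidem hRrank hPQ hQP hRle
end

section
/- Let φ be a map from positive semidefinite n×n complex matrices to itself that preserves order (A ≤ B implies φ(A) ≤ φ(B)) and preserves spectrum (the set of eigenvalues of φ(A) equals the set of eigenvalues of A for all A). Then for every A ≥ 0 and every ε > 0, one has ‖φ(A + εI) − φ(A)‖ ≤ nε, where ‖·‖ is the operator norm. -/
open Matrix
open scoped ComplexOrder
open scoped Matrix.Norms.L2Operator

/-!
Order preservation makes `φ (A + εI) - φ A` positive semidefinite, and the operator norm of a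
positive semidefinite matrix is its largest eigenvalue, hence at most its trace. So it suffices
that `φ` preserves traces. If `B` has `n` distinct eigenvalues, spectrum preservation forces
`φ B` to have exactly these eigenvalues, so `tr (φ B) = tr B`; if only the nonzero eigenvalues
of `B` are simple, still `tr (φ B) ≥ tr B`. Perturbing the eigenvalues of `M` by at most `δ` in
its own eigenbasis gives such matrices `B ≤ M ≤ C`, and monotonicity of `φ` and of the trace
yields `|tr (φ M) - tr M| ≤ n δ`.
-/

namespace Fintype

variable {ι : Type*} [Fintype ι]

theorem sum_eq_of_range_eq_of_injective {M : Type*} [AddCommMonoid M] {e c : ι → M}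
    (hc : Function.Injective c) (h : Set.range e = Set.range c) : ∑ i, e i = ∑ i, c i := by
  classical
  have himage : Finset.univ.image e = Finset.univ.image c :=
    Finset.coe_injective (by simpa only [Finset.coe_image, Finset.coe_univ, Set.image_univ])
  have he : Set.InjOn e (Finset.univ : Finset ι) := by
    rw [← Finset.card_image_iff, himage, Finset.card_image_of_injective _ hc]
  calc ∑ i, e i = ∑ x ∈ Finset.univ.image e, x := (Finset.sum_image (f := id) he).symm
    _ = ∑ i, c i := by rw [himage]; exact Finset.sum_image (f := id) hc.injOn

theorem sum_le_sum_of_range_eq {M : Type*} [AddCommMonoid M] [PartialOrder M]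
    [IsOrderedAddMonoid M] {e b : ι → M} (he : ∀ i, 0 ≤ e i)
    (hb : Set.InjOn b {i | b i ≠ 0}) (h : Set.range e = Set.range b) :
    ∑ i, b i ≤ ∑ i, e i := by
  classical
  choose g hg using fun i => (h ▸ Set.mem_range_self i : b i ∈ Set.range e)
  have hg_inj : Set.InjOn g ↑(Finset.univ.filter fun i => b i ≠ 0) := by
    intro i hi j hj hij
    simp only [Finset.coe_filter, Finset.mem_univ, true_and] at hi hj
    exact hb hi hj (by rw [← hg i, ← hg j, hij])
  calc ∑ i, b i = ∑ i ∈ Finset.univ.filter (fun i => b i ≠ 0), e (g i) := by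
        simp only [hg, Finset.sum_filter_ne_zero]
    _ = ∑ j ∈ (Finset.univ.filter fun i => b i ≠ 0).image g, e j := (Finset.sum_image hg_inj).symm
    _ ≤ ∑ j, e j := Finset.sum_le_sum_of_subset_of_nonneg (Finset.subset_univ _) fun j _ _ => he j

end Fintype

theorem exists_injective_le_le_add {n : ℕ} (e : Fin n → ℝ) {δ : ℝ} (hδ : 0 < δ) :
    ∃ c : Fin n → ℝ, Function.Injective c ∧ ∀ i, e i ≤ c i ∧ c i ≤ e i + δ := by
  -- Adding `k * (δ / n)` to the `k`-th smallest entry separates ties without reordering.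
  set σ := Tuple.sort e
  set η := δ / n
  have hmono : StrictMono fun k : Fin n => e (σ k) + (k : ℕ) * η :=
    (Tuple.monotone_sort e).add_strictMono fun k l hkl => by
      have : 0 < η := div_pos hδ (Nat.cast_pos.mpr (Fin.pos k))
      gcongr; exact_mod_cast hkl
  refine ⟨fun i => e i + ((σ.symm i : Fin n) : ℕ) * η, ?_, fun i => ⟨?_, ?_⟩⟩
  · have := hmono.injective.comp σ.symm.injective
    simpa only [Function.comp_def, Equiv.apply_symm_apply] using this
  · have : 0 < η := div_pos hδ (Nat.cast_pos.mpr (Fin.pos i))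
    simp only [le_add_iff_nonneg_right]; positivity
  · have hn : (0 : ℝ) < n := Nat.cast_pos.mpr (Fin.pos i)
    have hk : (((σ.symm i : Fin n) : ℕ) : ℝ) ≤ n := by exact_mod_cast (σ.symm i).is_lt.le
    simp only [add_le_add_iff_left, η]
    calc (((σ.symm i : Fin n) : ℕ) : ℝ) * (δ / n) ≤ n * (δ / n) := by gcongr
      _ = δ := by field_simp

namespace Matrix

variable {𝕜 : Type*} [RCLike 𝕜] {ι : Type*} [Fintype ι] [DecidableEq ι]

theorem IsHermitian.re_trace_eq_sum_eigenvalues {A : Matrix ι ι 𝕜} (hA : A.IsHermitian) :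
    RCLike.re A.trace = ∑ i, hA.eigenvalues i := by
  simp [hA.trace_eq_sum_eigenvalues]

theorem IsHermitian.sum_eigenvalues_le_of_posSemidef_sub {A B : Matrix ι ι 𝕜}
    (hA : A.IsHermitian) (hB : B.IsHermitian) (h : (B - A).PosSemidef) :
    ∑ i, hA.eigenvalues i ≤ ∑ i, hB.eigenvalues i := by
  have := RCLike.nonneg_iff.mp h.trace_nonneg |>.1
  rw [trace_sub, map_sub, hA.re_trace_eq_sum_eigenvalues, hB.re_trace_eq_sum_eigenvalues] at this
  linarith

theorem IsHermitian.range_eigenvalues_eq {A : Matrix ι ι 𝕜} (hA : A.IsHermitian) {κ : Type*}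
    {v : κ → ℝ} (h : spectrum 𝕜 A = Set.range fun i => (v i : 𝕜)) :
    Set.range hA.eigenvalues = Set.range v := by
  rw [hA.spectrum_eq_image_range, ← Function.comp_def, Set.range_comp] at h
  exact Set.image_injective.mpr RCLike.ofReal_injective h

theorem PosSemidef.norm_le_re_trace {A : Matrix ι ι ℂ} (hA : A.PosSemidef) :
    ‖A‖ ≤ A.trace.re := by
  rcases isEmpty_or_nonempty ι with hι | hι
  · simp [Subsingleton.elim A 0]
  rw [← RCLike.re_to_complex, hA.1.re_trace_eq_sum_eigenvalues]
  rcases CStarAlgebra.norm_or_neg_norm_mem_spectrum (a := A) hA.1.isSelfAdjoint with h | h <;>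
    obtain ⟨i, hi⟩ := hA.1.spectrum_real_eq_range_eigenvalues ▸ h
  · exact hi ▸ Finset.single_le_sum (fun j _ => hA.eigenvalues_nonneg j) (Finset.mem_univ i)
  · linarith [hA.eigenvalues_nonneg i, norm_nonneg A,
      Finset.sum_nonneg fun j (_ : j ∈ Finset.univ) => hA.eigenvalues_nonneg j]

theorem posSemidef_conjStarAlgAut_diagonal (U : unitary (Matrix ι ι 𝕜)) {v : ι → ℝ}
    (hv : 0 ≤ v) : (Unitary.conjStarAlgAut 𝕜 _ U (diagonal (RCLike.ofReal ∘ v))).PosSemidef := by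
  rw [Unitary.conjStarAlgAut_apply, star_eq_conjTranspose]
  exact (posSemidef_diagonal_iff.mpr fun i => RCLike.ofReal_nonneg.mpr (hv i))
    |>.mul_mul_conjTranspose_same _

theorem posSemidef_conjStarAlgAut_diagonal_sub (U : unitary (Matrix ι ι 𝕜)) {v w : ι → ℝ}
    (hwv : w ≤ v) : (Unitary.conjStarAlgAut 𝕜 _ U (diagonal (RCLike.ofReal ∘ v)) -
      Unitary.conjStarAlgAut 𝕜 _ U (diagonal (RCLike.ofReal ∘ w))).PosSemidef := by
  convert posSemidef_conjStarAlgAut_diagonal U (sub_nonneg.mpr hwv) using 1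
  rw [← map_sub, diagonal_sub]
  congr 2
  ext i
  simp

theorem spectrum_conjStarAlgAut_diagonal (U : unitary (Matrix ι ι 𝕜)) (v : ι → ℝ) :
    spectrum 𝕜 (Unitary.conjStarAlgAut 𝕜 _ U (diagonal (RCLike.ofReal ∘ v))) =
      Set.range fun i => (v i : 𝕜) := by
  rw [Unitary.conjStarAlgAut_apply, Unitary.spectrum_star_right_conjugate, spectrum_diagonal]
  rfl

end Matrix

section SpectrumPreserving

variable {𝕜 : Type*} [RCLike 𝕜] {n : ℕ} {φ : Matrix (Fin n) (Fin n) 𝕜 → Matrix (Fin n) (Fin n) 𝕜}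

theorem range_eigenvalues_map
    (hpsd : ∀ A : Matrix (Fin n) (Fin n) 𝕜, A.PosSemidef → (φ A).PosSemidef)
    (hspec : ∀ A : Matrix (Fin n) (Fin n) 𝕜, A.PosSemidef → spectrum 𝕜 (φ A) = spectrum 𝕜 A)
    {B : Matrix (Fin n) (Fin n) 𝕜} (hB : B.PosSemidef) {v : Fin n → ℝ}
    (hv : spectrum 𝕜 B = Set.range fun i => (v i : 𝕜)) :
    Set.range (hpsd B hB).1.eigenvalues = Set.range v :=
  (hpsd B hB).1.range_eigenvalues_eq (hspec B hB ▸ hv)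

theorem sum_eigenvalues_map_le_add
    (hpsd : ∀ A : Matrix (Fin n) (Fin n) 𝕜, A.PosSemidef → (φ A).PosSemidef)
    (horder : ∀ A B : Matrix (Fin n) (Fin n) 𝕜, A.PosSemidef → B.PosSemidef →
      (B - A).PosSemidef → (φ B - φ A).PosSemidef)
    (hspec : ∀ A : Matrix (Fin n) (Fin n) 𝕜, A.PosSemidef → spectrum 𝕜 (φ A) = spectrum 𝕜 A)
    {M : Matrix (Fin n) (Fin n) 𝕜} (hM : M.PosSemidef) {δ : ℝ} (hδ : 0 < δ) :
    ∑ i, (hpsd M hM).1.eigenvalues i ≤ ∑ i, hM.1.eigenvalues i + n * δ := by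
  set e := hM.1.eigenvalues
  set X := fun v : Fin n → ℝ =>
    Unitary.conjStarAlgAut 𝕜 _ hM.1.eigenvectorUnitary (diagonal (RCLike.ofReal ∘ v))
  obtain ⟨c, hc_inj, hc⟩ := exists_injective_le_le_add e hδ
  have hec : e ≤ c := fun i => (hc i).1
  have hC : (X c).PosSemidef :=
    posSemidef_conjStarAlgAut_diagonal _ fun i => (hM.eigenvalues_nonneg i).trans (hec i)
  have hCM : (X c - M).PosSemidef := by
    simpa only [X, e, ← hM.1.spectral_theorem] using
      posSemidef_conjStarAlgAut_diagonal_sub hM.1.eigenvectorUnitary hec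
  have htrace : ∑ i, (hpsd _ hC).1.eigenvalues i = ∑ i, c i :=
    Fintype.sum_eq_of_range_eq_of_injective hc_inj
      (range_eigenvalues_map hpsd hspec hC (spectrum_conjStarAlgAut_diagonal _ c))
  calc ∑ i, (hpsd M hM).1.eigenvalues i
      ≤ ∑ i, (hpsd _ hC).1.eigenvalues i :=
        IsHermitian.sum_eigenvalues_le_of_posSemidef_sub _ _ (horder M _ hM hC hCM)
    _ = ∑ i, c i := htrace
    _ ≤ ∑ i, (e i + δ) := Finset.sum_le_sum fun i _ => (hc i).2
    _ = ∑ i, e i + n * δ := by simp [Finset.sum_add_distrib]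

theorem sum_eigenvalues_le_map_add
    (hpsd : ∀ A : Matrix (Fin n) (Fin n) 𝕜, A.PosSemidef → (φ A).PosSemidef)
    (horder : ∀ A B : Matrix (Fin n) (Fin n) 𝕜, A.PosSemidef → B.PosSemidef →
      (B - A).PosSemidef → (φ B - φ A).PosSemidef)
    (hspec : ∀ A : Matrix (Fin n) (Fin n) 𝕜, A.PosSemidef → spectrum 𝕜 (φ A) = spectrum 𝕜 A)
    {M : Matrix (Fin n) (Fin n) 𝕜} (hM : M.PosSemidef) {δ : ℝ} (hδ : 0 < δ) :
    ∑ i, hM.1.eigenvalues i ≤ ∑ i, (hpsd M hM).1.eigenvalues i + n * δ := by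
  set e := hM.1.eigenvalues
  set X := fun v : Fin n → ℝ =>
    Unitary.conjStarAlgAut 𝕜 _ hM.1.eigenvectorUnitary (diagonal (RCLike.ofReal ∘ v))
  obtain ⟨c, hc_inj, hc⟩ := exists_injective_le_le_add e hδ
  -- Truncating `c - δ` at `0` keeps it below `e`; only the eigenvalue `0` may become repeated.
  set b := fun i => max (c i - δ) 0
  have hbe : b ≤ e := fun i => max_le (by linarith [(hc i).2]) (hM.eigenvalues_nonneg i)
  have hb_inj : Set.InjOn b {i | b i ≠ 0} := by
    have hb_eq : ∀ k, b k ≠ 0 → b k = c k - δ := fun k hk =>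
      max_eq_left (not_le.mp fun h => hk (max_eq_right h)).le
    intro i hi j hj hij
    exact hc_inj (by linarith [hb_eq i hi, hb_eq j hj])
  have hB : (X b).PosSemidef := posSemidef_conjStarAlgAut_diagonal _ fun i => le_max_right _ _
  have hMB : (M - X b).PosSemidef := by
    simpa only [X, e, ← hM.1.spectral_theorem] using
      posSemidef_conjStarAlgAut_diagonal_sub hM.1.eigenvectorUnitary hbe
  have htrace : ∑ i, b i ≤ ∑ i, (hpsd _ hB).1.eigenvalues i :=
    Fintype.sum_le_sum_of_range_eq (hpsd _ hB).eigenvalues_nonneg hb_inj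
      (range_eigenvalues_map hpsd hspec hB (spectrum_conjStarAlgAut_diagonal _ b))
  calc ∑ i, e i
      ≤ ∑ i, (b i + δ) :=
        Finset.sum_le_sum fun i _ => by linarith [(hc i).1, le_max_left (c i - δ) 0]
    _ = ∑ i, b i + n * δ := by simp [Finset.sum_add_distrib]
    _ ≤ ∑ i, (hpsd _ hB).1.eigenvalues i + n * δ := by gcongr
    _ ≤ ∑ i, (hpsd M hM).1.eigenvalues i + n * δ := add_le_add_left
        (IsHermitian.sum_eigenvalues_le_of_posSemidef_sub _ _ (horder _ M hB hM hMB)) _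

theorem trace_map_eq
    (hpsd : ∀ A : Matrix (Fin n) (Fin n) 𝕜, A.PosSemidef → (φ A).PosSemidef)
    (horder : ∀ A B : Matrix (Fin n) (Fin n) 𝕜, A.PosSemidef → B.PosSemidef →
      (B - A).PosSemidef → (φ B - φ A).PosSemidef)
    (hspec : ∀ A : Matrix (Fin n) (Fin n) 𝕜, A.PosSemidef → spectrum 𝕜 (φ A) = spectrum 𝕜 A)
    {M : Matrix (Fin n) (Fin n) 𝕜} (hM : M.PosSemidef) :
    (φ M).trace = M.trace := by
  have hsmall : ∀ ε : ℝ, 0 < ε → n * (ε / (n + 1)) ≤ ε := fun ε hε => by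
    rw [mul_div_assoc', div_le_iff₀ (by positivity)]
    nlinarith
  have hsum : ∑ i, (hpsd M hM).1.eigenvalues i = ∑ i, hM.1.eigenvalues i := by
    refine le_antisymm (le_of_forall_pos_le_add fun ε hε => ?_)
      (le_of_forall_pos_le_add fun ε hε => ?_)
    · linarith [hsmall ε hε, sum_eigenvalues_map_le_add hpsd horder hspec hM
        (div_pos hε (n.cast_add_one_pos (α := ℝ)))]
    · linarith [hsmall ε hε, sum_eigenvalues_le_map_add hpsd horder hspec hM
        (div_pos hε (n.cast_add_one_pos (α := ℝ)))]
  rw [(hpsd M hM).1.trace_eq_sum_eigenvalues, hM.1.trace_eq_sum_eigenvalues]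
  exact_mod_cast congrArg ((↑) : ℝ → 𝕜) hsum

end SpectrumPreserving

/-- If `φ` maps positive semidefinite matrices to positive semidefinite matrices,
preserves the Loewner order and preserves the spectrum, then
`‖φ(A + εI) - φ(A)‖ ≤ nε` in the `ℓ²` operator norm. -/
theorem stmt4 {n : ℕ}
    (φ : Matrix (Fin n) (Fin n) ℂ → Matrix (Fin n) (Fin n) ℂ)
    (hpsd : ∀ A : Matrix (Fin n) (Fin n) ℂ, A.PosSemidef → (φ A).PosSemidef)
    (horder : ∀ A B : Matrix (Fin n) (Fin n) ℂ, A.PosSemidef → B.PosSemidef →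
      (B - A).PosSemidef → (φ B - φ A).PosSemidef)
    (hspec : ∀ A : Matrix (Fin n) (Fin n) ℂ, A.PosSemidef →
      spectrum ℂ (φ A) = spectrum ℂ A)
    (A : Matrix (Fin n) (Fin n) ℂ) (hA : A.PosSemidef)
    (ε : ℝ) (hε : 0 < ε) :
    ‖φ (A + ε • (1 : Matrix (Fin n) (Fin n) ℂ)) - φ A‖ ≤ n * ε := by
  have hεI : (ε • (1 : Matrix (Fin n) (Fin n) ℂ)).PosSemidef := PosSemidef.one.smul hε.le
  have hM : (A + ε • (1 : Matrix (Fin n) (Fin n) ℂ)).PosSemidef := hA.add hεI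
  have hD := horder A _ hA hM (by rwa [add_sub_cancel_left])
  calc ‖φ (A + ε • (1 : Matrix (Fin n) (Fin n) ℂ)) - φ A‖
      ≤ (φ (A + ε • (1 : Matrix (Fin n) (Fin n) ℂ)) - φ A).trace.re := hD.norm_le_re_trace
    _ = n * ε := by
        rw [trace_sub, trace_map_eq hpsd horder hspec hM, trace_map_eq hpsd horder hspec hA,
          ← trace_sub, add_sub_cancel_left, trace_smul, trace_one]
        simp [mul_comm]
end

section
/- Let φ be an injective map on positive semidefinite n×n complex matrices which preserves order and shrinks spectrum (σ(φ(A)) ⊆ σ(A) for all A), and suppose it is known that φ maps orthogonal projections of rank k to orthogonal projections of rank k for each k. Then for every orthogonal projection P and every scalar α ≥ 0, φ(αP) = αφ(P). -/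
/-!
Fix `α > 0` and put `ψ R = α⁻¹ • φ (α • R)`. For a projection `R` the spectrum of `α • R` lies
in `{0, α}`, so by spectrum shrinking the hermitian matrix `ψ R` is again a projection;
injectivity and monotonicity of `φ` make `ψ` strictly increasing on projections. Rank is
strictly increasing on projections and every projection of rank `k + 1` dominates one of rank
`k`, so a strictly increasing self-map of the projections preserves rank (for the upper bound,
apply this to `R ↦ 1 - ψ (1 - R)`). Finally `α • P` is comparable with `P`, so `ψ P ≤ c • φ P`
or `φ P ≤ c • ψ P` for some `c`; two projections related this way are ordered, and ordered
projections of equal rank coincide. Hence `ψ P = φ P`.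
-/

open Matrix
open scoped ComplexOrder MatrixOrder Matrix.Norms.L2Operator

namespace Matrix

section Field

variable {K m : Type*} [Field K] [Fintype m] [DecidableEq m]

theorem rank_eq_zero_iff {A : Matrix m m K} : A.rank = 0 ↔ A = 0 := by
  rw [rank, Submodule.finrank_eq_zero, LinearMap.range_eq_bot, ← toLin'_apply',
    LinearEquiv.map_eq_zero_iff]

theorem trace_eq_rank_of_isIdempotentElem {A : Matrix m m K} (hA : IsIdempotentElem A) :
    A.trace = A.rank := by
  have h : IsIdempotentElem (toLin' A) := hA.map toLinAlgEquiv'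
  rw [← trace_toLin'_eq]
  exact ((LinearMap.isProj_range_iff_isIdempotentElem _).mpr h).trace

theorem rank_add_rank_sub_of_isIdempotentElem [CharZero K] {P Q : Matrix m m K}
    (hP : IsIdempotentElem P) (hQ : IsIdempotentElem Q) (hQP : IsIdempotentElem (Q - P)) :
    P.rank + (Q - P).rank = Q.rank := by
  have h := congrArg trace (add_sub_cancel P Q)
  rw [trace_add, trace_eq_rank_of_isIdempotentElem hP, trace_eq_rank_of_isIdempotentElem hQP,
    trace_eq_rank_of_isIdempotentElem hQ] at h
  exact_mod_cast h

theorem rank_add_rank_one_sub_of_isIdempotentElem [CharZero K] {P : Matrix m m K}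
    (hP : IsIdempotentElem P) : P.rank + (1 - P).rank = Fintype.card m := by
  rw [rank_add_rank_sub_of_isIdempotentElem hP IsIdempotentElem.one hP.one_sub, rank_one]

end Field

section LineProjection

variable {𝕜 m : Type*} [RCLike 𝕜] [Fintype m] {v : m → 𝕜}

noncomputable def lineProj (v : m → 𝕜) : Matrix m m 𝕜 :=
  (star v ⬝ᵥ v)⁻¹ • vecMulVec v (star v)

theorem isStarProjection_lineProj (hv : v ≠ 0) : IsStarProjection (lineProj v) := by
  have hv' : star v ⬝ᵥ v ≠ 0 := dotProduct_star_self_eq_zero.not.mpr hv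
  have hstar : star (star v ⬝ᵥ v) = star v ⬝ᵥ v := by
    rw [← star_dotProduct_star, star_star]
  constructor
  · rw [IsIdempotentElem, lineProj, smul_mul_smul_comm, vecMulVec_mul_vecMulVec, vecMulVec_smul,
      smul_smul, mul_assoc, inv_mul_cancel₀ hv', mul_one]
  · rw [IsSelfAdjoint, lineProj, star_smul, star_inv₀, hstar]
    exact congrArg _ ((conjTranspose_vecMulVec _ _).trans (by rw [star_star]))

theorem trace_lineProj (hv : v ≠ 0) : (lineProj v).trace = 1 := by
  rw [lineProj, trace_smul, trace_vecMulVec, dotProduct_comm v, smul_eq_mul,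
    inv_mul_cancel₀ (dotProduct_star_self_eq_zero.not.mpr hv)]

theorem mul_lineProj_of_mulVec_eq {P : Matrix m m 𝕜} (hP : P *ᵥ v = v) :
    P * lineProj v = lineProj v := by
  rw [lineProj, Matrix.mul_smul, mul_vecMulVec, hP]

end LineProjection

end Matrix

namespace IsStarProjection

variable {m : Type*} [Fintype m] [DecidableEq m] {P Q : Matrix m m ℂ}

theorem rank_lt_rank_of_lt (hP : IsStarProjection P) (hQ : IsStarProjection Q) (h : P < Q) :
    P.rank < Q.rank := by
  have hQP : IsStarProjection (Q - P) := (hP.le_iff_sub hQ).mp h.le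
  have hrank : (Q - P).rank ≠ 0 := by
    rw [Ne, Matrix.rank_eq_zero_iff, sub_eq_zero]
    exact h.ne'
  have := rank_add_rank_sub_of_isIdempotentElem hP.isIdempotentElem hQ.isIdempotentElem
    hQP.isIdempotentElem
  omega

theorem le_of_le_smul (hP : IsStarProjection P) (hQ : IsStarProjection Q) {c : ℝ}
    (h : P ≤ c • Q) : P ≤ Q := by
  have hQR : Q * (1 - Q) = 0 := by rw [mul_sub, mul_one, hQ.isIdempotentElem.eq, sub_self]
  -- compressing `P ≤ c • Q` by `R = 1 - Q` gives `(P R)⋆ (P R) ≤ 0`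
  have hPR : star (P * (1 - Q)) * (P * (1 - Q)) ≤ 0 := by
    calc star (P * (1 - Q)) * (P * (1 - Q)) = star (1 - Q) * P * (1 - Q) := by
          rw [star_mul, hP.isSelfAdjoint.star_eq, mul_assoc, ← mul_assoc P,
            hP.isIdempotentElem.eq, mul_assoc]
      _ ≤ star (1 - Q) * (c • Q) * (1 - Q) := star_left_conjugate_le_conjugate h _
      _ = 0 := by rw [mul_assoc, smul_mul_assoc, hQR, smul_zero, mul_zero]
  have hPR0 : P * (1 - Q) = 0 :=
    (CStarRing.star_mul_self_eq_zero_iff _).mp (le_antisymm hPR (star_mul_self_nonneg _))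
  rw [mul_sub, mul_one, sub_eq_zero] at hPR0
  exact (hP.le_iff_mul_eq_left hQ).mpr hPR0.symm

theorem eq_of_le_smul_of_rank_eq (hP : IsStarProjection P) (hQ : IsStarProjection Q) {c : ℝ}
    (h : P ≤ c • Q) (hrank : P.rank = Q.rank) : P = Q := by
  by_contra hne
  exact (hP.rank_lt_rank_of_lt hQ ((hP.le_of_le_smul hQ h).lt_of_ne hne)).ne hrank

theorem exists_lt_of_rank_eq_succ (hP : IsStarProjection P) {k : ℕ} (hk : P.rank = k + 1) :
    ∃ Q, IsStarProjection Q ∧ Q < P ∧ Q.rank = k := by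
  obtain ⟨x, hx⟩ : ∃ x, P *ᵥ x ≠ 0 := by
    by_contra! h
    have hP0 : P = 0 := ext_of_mulVec_single fun i => by rw [h, zero_mulVec]
    rw [hP0, rank_zero] at hk
    omega
  set E := lineProj (P *ᵥ x)
  have hE : IsStarProjection E := isStarProjection_lineProj hx
  have hEP : E ≤ P := (hE.le_iff_mul_eq_right hP).mpr <|
    mul_lineProj_of_mulVec_eq (by rw [mulVec_mulVec, hP.isIdempotentElem.eq])
  have hErank : E.rank = 1 := by
    exact_mod_cast (trace_eq_rank_of_isIdempotentElem hE.isIdempotentElem).symm.trans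
      (trace_lineProj hx)
  have hQ : IsStarProjection (P - E) := (hE.le_iff_sub hP).mp hEP
  have hrank := rank_add_rank_sub_of_isIdempotentElem hQ.isIdempotentElem hP.isIdempotentElem
    (by rw [sub_sub_cancel]; exact hE.isIdempotentElem)
  rw [sub_sub_cancel, hErank] at hrank
  refine ⟨P - E, hQ, sub_lt_self P (hE.nonneg.lt_of_ne ?_), by omega⟩
  intro h
  rw [← h, rank_zero] at hErank
  exact zero_ne_one hErank

end IsStarProjection

section RankPreservation

variable {m : Type*} [Fintype m] [DecidableEq m] {ψ : Matrix m m ℂ → Matrix m m ℂ}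

theorem rank_le_rank_apply_of_strictMonoOn
    (hmaps : Set.MapsTo ψ {P | IsStarProjection P} {P | IsStarProjection P})
    (hmono : StrictMonoOn ψ {P | IsStarProjection P}) {P : Matrix m m ℂ}
    (hP : IsStarProjection P) : P.rank ≤ (ψ P).rank := by
  induction hk : P.rank generalizing P with
  | zero => exact Nat.zero_le _
  | succ k ih =>
    obtain ⟨Q, hQ, hQP, rfl⟩ := hP.exists_lt_of_rank_eq_succ hk
    exact (ih hQ rfl).trans_lt
      ((hmaps hQ).rank_lt_rank_of_lt (hmaps hP) (hmono hQ hP hQP))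

theorem rank_apply_eq_of_strictMonoOn
    (hmaps : Set.MapsTo ψ {P | IsStarProjection P} {P | IsStarProjection P})
    (hmono : StrictMonoOn ψ {P | IsStarProjection P}) {P : Matrix m m ℂ}
    (hP : IsStarProjection P) : (ψ P).rank = P.rank := by
  -- the upper bound is the lower bound for the complemented map `R ↦ 1 - ψ (1 - R)` at `1 - P`
  have hcompl := rank_le_rank_apply_of_strictMonoOn (ψ := fun R => 1 - ψ (1 - R))
    (fun R (hR : IsStarProjection R) => (hmaps hR.one_sub).one_sub)
    (fun R (hR : IsStarProjection R) S (hS : IsStarProjection S) hRS =>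
      sub_lt_sub_left (hmono hS.one_sub hR.one_sub (sub_lt_sub_left hRS 1)) 1)
    hP.one_sub
  simp only [sub_sub_cancel] at hcompl
  have := rank_add_rank_one_sub_of_isIdempotentElem hP.isIdempotentElem
  have := rank_add_rank_one_sub_of_isIdempotentElem (hmaps hP).isIdempotentElem
  have := rank_le_rank_apply_of_strictMonoOn hmaps hmono hP
  omega

end RankPreservation

section RescaledMap

variable {m : Type*} [Fintype m] [DecidableEq m]

theorem isStarProjection_inv_smul_of_spectrum_subset {B R : Matrix m m ℂ}
    (hB : B.IsHermitian) (hR : IsIdempotentElem R) {α : ℝ} (hα : α ≠ 0)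
    (h : spectrum ℂ B ⊆ spectrum ℂ (α • R)) :
    IsStarProjection (α⁻¹ • B) := by
  have hsa : IsSelfAdjoint (α⁻¹ • B) := (IsSelfAdjoint.all _).smul hB.isSelfAdjoint
  refine ⟨(isIdempotentElem_iff_spectrum_subset ℝ _ hsa).mpr fun r hr => ?_, hsa⟩
  let u := Units.mk0 α hα
  have hαr : u • r ∈ spectrum ℝ B := by
    rwa [← spectrum.smul_mem_smul_iff (r := u), Units.smul_mk0, smul_inv_smul₀ hα] at hr
  have hαr' := (spectrum.algebraMap_mem_iff ℂ).mp <|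
    h ((spectrum.algebraMap_mem_iff ℂ).mpr hαr)
  exact hR.spectrum_subset ℝ (spectrum.smul_mem_smul_iff.mp hαr')

variable {φ : Matrix m m ℂ → Matrix m m ℂ} {α : ℝ}

theorem mapsTo_inv_smul_comp_smul
    (hpsd : Set.MapsTo φ {A | A.PosSemidef} {A | A.PosSemidef})
    (hspec : ∀ A, A.PosSemidef → spectrum ℂ (φ A) ⊆ spectrum ℂ A) (hα : 0 < α) :
    Set.MapsTo (fun R => α⁻¹ • φ (α • R))
      {P | IsStarProjection P} {P | IsStarProjection P} :=
  fun R (hR : IsStarProjection R) =>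
    have hαR : (α • R).PosSemidef := (nonneg_iff_posSemidef.mp hR.nonneg).smul hα.le
    isStarProjection_inv_smul_of_spectrum_subset (hpsd hαR).isHermitian hR.isIdempotentElem
      hα.ne' (hspec _ hαR)

theorem strictMonoOn_inv_smul_comp_smul (hinj : Set.InjOn φ {A | A.PosSemidef})
    (hmono : MonotoneOn φ {A | A.PosSemidef}) (hα : 0 < α) :
    StrictMonoOn (fun R => α⁻¹ • φ (α • R)) {P | IsStarProjection P} := by
  intro R (hR : IsStarProjection R) S (hS : IsStarProjection S) hRS
  have hαR : (α • R).PosSemidef := (nonneg_iff_posSemidef.mp hR.nonneg).smul hα.le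
  have hαS : (α • S).PosSemidef := (nonneg_iff_posSemidef.mp hS.nonneg).smul hα.le
  refine smul_lt_smul_of_pos_left (lt_of_le_of_ne ?_ ?_) (inv_pos.mpr hα)
  · exact hmono hαR hαS (smul_le_smul_of_nonneg_left hRS.le hα.le)
  · exact fun h => hRS.ne (smul_right_injective _ hα.ne' (hinj hαR hαS h))

end RescaledMap

/-- An injective, order-preserving, spectrum-shrinking map on positive semidefinite
matrices which maps rank-`k` orthogonal projections to rank-`k` orthogonal projections
satisfies `φ(αP) = αφ(P)` for every orthogonal projection `P` and scalar `α ≥ 0`. -/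
theorem stmt8 {n : ℕ}
    (φ : Matrix (Fin n) (Fin n) ℂ → Matrix (Fin n) (Fin n) ℂ)
    (hpsd : ∀ A : Matrix (Fin n) (Fin n) ℂ, A.PosSemidef → (φ A).PosSemidef)
    (hinj : ∀ A B : Matrix (Fin n) (Fin n) ℂ, A.PosSemidef → B.PosSemidef →
      φ A = φ B → A = B)
    (horder : ∀ A B : Matrix (Fin n) (Fin n) ℂ, A.PosSemidef → B.PosSemidef →
      (B - A).PosSemidef → (φ B - φ A).PosSemidef)
    (hspec : ∀ A : Matrix (Fin n) (Fin n) ℂ, A.PosSemidef →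
      spectrum ℂ (φ A) ⊆ spectrum ℂ A)
    (hproj : ∀ P : Matrix (Fin n) (Fin n) ℂ, P.IsHermitian → P * P = P →
      (φ P).IsHermitian ∧ φ P * φ P = φ P ∧ (φ P).rank = P.rank) :
    ∀ P : Matrix (Fin n) (Fin n) ℂ, P.IsHermitian → P * P = P →
      ∀ α : ℝ, 0 ≤ α → φ (α • P) = α • φ P := by
  intro P hPh hPP α hα
  rcases hα.eq_or_lt with rfl | hα
  · rw [zero_smul, zero_smul, ← Matrix.rank_eq_zero_iff]
    simpa using (hproj 0 isHermitian_zero (mul_zero 0)).2.2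
  have hP : IsStarProjection P := ⟨hPP, hPh⟩
  obtain ⟨hφPh, hφPP, hφP_rank⟩ := hproj P hPh hPP
  have hφP : IsStarProjection (φ P) := ⟨hφPP, hφPh⟩
  have hmono : MonotoneOn φ {A | A.PosSemidef} := fun A hA B hB => horder A B hA hB
  have hmaps := mapsTo_inv_smul_comp_smul hpsd hspec hα
  set ψ := fun R => α⁻¹ • φ (α • R)
  have hψP_rank : (ψ P).rank = P.rank := rank_apply_eq_of_strictMonoOn hmaps
    (strictMonoOn_inv_smul_comp_smul (fun A hA B hB => hinj A B hA hB) hmono hα) hP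
  have hφαP : φ (α • P) = α • ψ P := (smul_inv_smul₀ hα.ne' _).symm
  have hP0 : P.PosSemidef := nonneg_iff_posSemidef.mp hP.nonneg
  suffices ψ P = φ P by rw [hφαP, this]
  rcases le_total α 1 with hα1 | hα1
  · refine (hmaps hP).eq_of_le_smul_of_rank_eq hφP (c := α⁻¹) ?_
      (hψP_rank.trans hφP_rank.symm)
    exact smul_le_smul_of_nonneg_left (hmono (hP0.smul hα.le) hP0
      (smul_le_of_le_one_left hP.nonneg hα1)) (inv_nonneg.mpr hα.le)
  · refine (hφP.eq_of_le_smul_of_rank_eq (hmaps hP) (c := α) ?_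
      (hφP_rank.trans hψP_rank.symm)).symm
    rw [← hφαP]
    exact hmono hP0 (hP0.smul hα.le) (le_smul_of_one_le_left hP.nonneg hα1)
end

section
/- Let φ be a map on positive semidefinite n×n complex matrices (n ≥ 2) that preserves order, preserves the characteristic polynomial, fixes all rank-one orthogonal projections, and fixes all matrices of the form tI − cP (t > 0, 0 ≤ c ≤ t, P a rank-one projection). Then φ(A) = A for every positive semidefinite A. -/
/-!
Diagonalise `A = U D U*` with `D = diag(μ)` and pick `t > 0` above every eigenvalue `μ j`.
With `Q j` the projection onto the `j`-th eigenvector, `A ≤ tI - (t - μ j) Q j`, and the right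
side is fixed by `φ`, so `φ A ≤ tI - (t - μ j) Q j` as well. In the eigenbasis this bounds the
`j`-th diagonal entry of `φ A` by `μ j`; since `φ A` and `A` have the same trace, all these bounds
are equalities, and a positive semidefinite matrix with a zero diagonal entry has a zero column.
Hence `φ A` acts on every eigenvector as `A` does.
-/

open Matrix Unitary
open scoped ComplexOrder MatrixOrder

namespace Matrix

variable {𝕜 n : Type*} [RCLike 𝕜] [DecidableEq n]

theorem smul_one_sub_smul_single_eq_diagonal (t s : ℝ) (j : n) :
    (t • 1 - (t - s) • single j j 1 : Matrix n n 𝕜) =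
      diagonal (Function.update (fun _ ↦ (t : 𝕜)) j s) := by
  rw [← diagonal_single, ← diagonal_one, ← diagonal_smul, ← diagonal_smul, diagonal_sub]
  congr 1
  funext i
  by_cases h : i = j <;> simp [h, RCLike.real_smul_eq_coe_mul]

theorem diagonal_le_smul_one_sub_smul_single {d : n → ℝ} {t : ℝ} (hd : ∀ i, d i ≤ t) (j : n) :
    diagonal (fun i ↦ (d i : 𝕜)) ≤ t • 1 - (t - d j) • single j j 1 := by
  rw [le_iff, smul_one_sub_smul_single_eq_diagonal, diagonal_sub, posSemidef_diagonal_iff]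
  intro i
  by_cases hij : i = j
  · subst hij; simp
  · rw [Function.update_of_ne hij, ← RCLike.ofReal_sub, RCLike.ofReal_nonneg, sub_nonneg]
    exact hd i

variable [Fintype n]

def IsRankOneProjection (P : Matrix n n 𝕜) : Prop :=
  P.IsHermitian ∧ P * P = P ∧ P.rank = 1

theorem isRankOneProjection_single (j : n) : IsRankOneProjection (single j j (1 : 𝕜)) := by
  refine ⟨by simp [IsHermitian, conjTranspose_single], by simp, ?_⟩
  rw [← diagonal_single, rank_diagonal]
  simp [Pi.single_apply]

section Conjugation

variable (U : unitary (Matrix n n 𝕜))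

theorem conjStarAlgAut_smul_one_sub_smul (t c : ℝ) (X : Matrix n n 𝕜) :
    conjStarAlgAut 𝕜 _ U (t • 1 - c • X) = t • 1 - c • conjStarAlgAut 𝕜 _ U X := by
  simp only [conjStarAlgAut_apply, mul_sub, sub_mul, mul_smul_comm, smul_mul_assoc, mul_one,
    mul_star_self_of_mem U.2]

theorem rank_conjStarAlgAut (X : Matrix n n 𝕜) : (conjStarAlgAut 𝕜 _ U X).rank = X.rank := by
  rw [conjStarAlgAut_apply,
    rank_mul_eq_left_of_isUnit_det _ _ (isUnit_det_of_left_inverse (mul_star_self_of_mem U.2)),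
    rank_mul_eq_right_of_isUnit_det _ _ (isUnit_det_of_left_inverse (star_mul_self_of_mem U.2))]

theorem trace_conjStarAlgAut (X : Matrix n n 𝕜) : (conjStarAlgAut 𝕜 _ U X).trace = X.trace := by
  rw [conjStarAlgAut_apply, trace_mul_cycle, star_mul_self_of_mem U.2, one_mul]

theorem IsRankOneProjection.conjStarAlgAut {P : Matrix n n 𝕜} (hP : IsRankOneProjection P) :
    IsRankOneProjection (conjStarAlgAut 𝕜 _ U P) := by
  obtain ⟨hH, hidem, hrank⟩ := hP
  exact ⟨(hH.isSelfAdjoint.map _).isHermitian, by rw [← map_mul, hidem],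
    by rw [rank_conjStarAlgAut, hrank]⟩

end Conjugation

theorem PosSemidef.apply_eq_zero_of_apply_self_eq_zero {M : Matrix n n 𝕜} (hM : M.PosSemidef)
    {j : n} (hj : M j j = 0) (i : n) : M i j = 0 := by
  have h : M *ᵥ Pi.single j 1 = 0 :=
    (hM.dotProduct_mulVec_zero_iff _).mp (by simpa [mulVec_single_one] using hj)
  simpa [mulVec_single_one] using congrFun h i

theorem eq_diagonal_of_le_of_trace_eq {C : Matrix n n 𝕜} {d : n → ℝ} {t : ℝ}
    (hle : ∀ j, C ≤ t • 1 - (t - d j) • single j j 1) (htr : C.trace = ∑ j, (d j : 𝕜)) :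
    C = diagonal fun j ↦ (d j : 𝕜) := by
  set M : n → Matrix n n 𝕜 := fun j ↦ t • 1 - (t - d j) • single j j 1 - C
  have hM (j : n) : (M j).PosSemidef := hle j
  have hMcol (i j : n) : M j i j = diagonal (fun k ↦ (d k : 𝕜)) i j - C i j := by
    simp only [M]
    rw [sub_apply, smul_one_sub_smul_single_eq_diagonal]
    by_cases h : i = j <;> simp [h]
  have hdiag (j : n) : C j j = d j := by
    have hsum : ∑ j, M j j j = 0 := by
      simp only [hMcol, diagonal_apply_eq, Finset.sum_sub_distrib, ← htr, trace, diag, sub_self]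
    have hzero := (Finset.sum_eq_zero_iff_of_nonneg fun j _ ↦ (hM j).diag_nonneg).mp hsum j
      (Finset.mem_univ j)
    rw [hMcol, diagonal_apply_eq, sub_eq_zero] at hzero
    exact hzero.symm
  ext i j
  have hzero := (hM j).apply_eq_zero_of_apply_self_eq_zero
    (by rw [hMcol, diagonal_apply_eq, hdiag, sub_self]) i
  rwa [hMcol, sub_eq_zero, eq_comm] at hzero

end Matrix

theorem stmt15_general {n : ℕ}
    (φ : Matrix (Fin n) (Fin n) ℂ → Matrix (Fin n) (Fin n) ℂ)
    (horder : ∀ A B : Matrix (Fin n) (Fin n) ℂ, A.PosSemidef → B.PosSemidef →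
      (B - A).PosSemidef → (φ B - φ A).PosSemidef)
    (hcharpoly : ∀ A : Matrix (Fin n) (Fin n) ℂ, A.PosSemidef →
      (φ A).charpoly = A.charpoly)
    (hfixtc : ∀ t c : ℝ, 0 < t → 0 ≤ c → c ≤ t →
      ∀ P : Matrix (Fin n) (Fin n) ℂ, P.IsHermitian → P * P = P → P.rank = 1 →
        φ (t • (1 : Matrix (Fin n) (Fin n) ℂ) - c • P) =
          t • (1 : Matrix (Fin n) (Fin n) ℂ) - c • P) :
    ∀ A : Matrix (Fin n) (Fin n) ℂ, A.PosSemidef → φ A = A := by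
  intro A hA
  set U := hA.isHermitian.eigenvectorUnitary
  set Φ := conjStarAlgAut ℂ _ U
  set μ := hA.isHermitian.eigenvalues
  have hμ0 : ∀ i, 0 ≤ μ i := hA.eigenvalues_nonneg
  set t : ℝ := ∑ i, μ i + 1
  have hμt (i : Fin n) : μ i < t := by
    linarith [Finset.single_le_sum (fun k _ ↦ hμ0 k) (Finset.mem_univ i)]
  have hAΦ : A = Φ (diagonal fun i ↦ (μ i : ℂ)) := hA.isHermitian.spectral_theorem
  have hA_le (j : Fin n) : A ≤ t • 1 - (t - μ j) • Φ (single j j 1) := by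
    rw [hAΦ, ← conjStarAlgAut_smul_one_sub_smul, map_le_map_iff]
    exact diagonal_le_smul_one_sub_smul_single (fun i ↦ (hμt i).le) j
  have hφA_le (j : Fin n) : φ A ≤ t • 1 - (t - μ j) • Φ (single j j 1) := by
    obtain ⟨hH, hidem, hrank⟩ := (isRankOneProjection_single j).conjStarAlgAut U
    have hfix := hfixtc t (t - μ j) (by linarith [hμt j, hμ0 j]) (by linarith [hμt j])
      (by linarith [hμ0 j]) _ hH hidem hrank
    have hle := horder A _ hA (hA.nonneg.trans (hA_le j)).posSemidef (hA_le j)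
    rwa [hfix] at hle
  have hC : Φ.symm (φ A) = diagonal fun i ↦ (μ i : ℂ) := by
    refine eq_diagonal_of_le_of_trace_eq (t := t) (fun j ↦ ?_) ?_
    · rw [← map_le_map_iff Φ, Φ.apply_symm_apply, conjStarAlgAut_smul_one_sub_smul]
      exact hφA_le j
    · rw [← trace_conjStarAlgAut U, Φ.apply_symm_apply, trace_eq_neg_charpoly_nextCoeff,
        hcharpoly A hA, ← trace_eq_neg_charpoly_nextCoeff]
      exact hA.isHermitian.trace_eq_sum_eigenvalues
  rw [← Φ.apply_symm_apply (φ A), hC, ← hAΦ]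

/-- A map on positive semidefinite matrices (`n ≥ 2`) which preserves the Loewner order,
preserves the characteristic polynomial, fixes all rank-one orthogonal projections and
fixes all matrices `tI - cP` (`t > 0`, `0 ≤ c ≤ t`, `P` a rank-one projection) is the
identity on positive semidefinite matrices. -/
theorem stmt15 {n : ℕ} (hn : 2 ≤ n)
    (φ : Matrix (Fin n) (Fin n) ℂ → Matrix (Fin n) (Fin n) ℂ)
    (hpsd : ∀ A : Matrix (Fin n) (Fin n) ℂ, A.PosSemidef → (φ A).PosSemidef)
    (horder : ∀ A B : Matrix (Fin n) (Fin n) ℂ, A.PosSemidef → B.PosSemidef →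
      (B - A).PosSemidef → (φ B - φ A).PosSemidef)
    (hcharpoly : ∀ A : Matrix (Fin n) (Fin n) ℂ, A.PosSemidef →
      (φ A).charpoly = A.charpoly)
    (hfixproj : ∀ P : Matrix (Fin n) (Fin n) ℂ, P.IsHermitian → P * P = P →
      P.rank = 1 → φ P = P)
    (hfixtc : ∀ t c : ℝ, 0 < t → 0 ≤ c → c ≤ t →
      ∀ P : Matrix (Fin n) (Fin n) ℂ, P.IsHermitian → P * P = P → P.rank = 1 →
        φ (t • (1 : Matrix (Fin n) (Fin n) ℂ) - c • P) =
          t • (1 : Matrix (Fin n) (Fin n) ℂ) - c • P) :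
    ∀ A : Matrix (Fin n) (Fin n) ℂ, A.PosSemidef → φ A = A :=
  stmt15_general φ horder hcharpoly hfixtc
end
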